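/- Let α_n be the effective resistance across the first rung of the ladder graph P_2 □ P_n (i.e., between vertices (1,1) and (2,1)). Then α_1 = 1 and for all n ≥ 1, α_{n+1} = (α_n + 2)/(α_n + 3). -/

import Mathlib

open Classical Matrix

/-- The four Penrose conditions characterizing the Moore–Penrose pseudoinverse
of a real square matrix. -/
def IsMoorePenroseInverse {V : Type*} [Fintype V] [DecidableEq V]
    (L P : Matrix V V ℝ) : Prop :=
  L * P * L = L ∧ P * L * P = P ∧ (L * P)ᵀ = L * P ∧ (P * L)ᵀ = P * L

/-- The Moore–Penrose pseudoinverse of a real square matrix. -/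
noncomputable def pinv {V : Type*} [Fintype V] [DecidableEq V]
    (L : Matrix V V ℝ) : Matrix V V ℝ :=
  if h : ∃ P, IsMoorePenroseInverse L P then h.choose else 0

/-- Effective resistance between `x` and `y` computed from a (weighted) Laplacian `L`. -/
noncomputable def effResM {V : Type*} [Fintype V] [DecidableEq V]
    (L : Matrix V V ℝ) (x y : V) : ℝ :=
  pinv L x x + pinv L y y - 2 * pinv L x y

/-- Effective resistance between vertices `x` and `y` of a simple graph `G`. -/
noncomputable def effRes {V : Type*} [Fintype V] [DecidableEq V]
    (G : SimpleGraph V) (x y : V) : ℝ :=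
  effResM (G.lapMatrix ℝ) x y

/-- The node resistance curvature `p_x = 1 - (1/2) ∑_{y ~ x} ω_{x,y}`. -/
noncomputable def curv {V : Type*} [Fintype V] [DecidableEq V]
    (G : SimpleGraph V) (x : V) : ℝ :=
  1 - (1/2) * ∑ y : V, if G.Adj x y then effRes G x y else 0

/-- The grid graph `P_m □ P_n` (vertex `(i,j)` of the paper corresponds to
`(⟨i-1⟩, ⟨j-1⟩) : Fin m × Fin n`). -/
def grid (m n : ℕ) : SimpleGraph (Fin m × Fin n) :=
  (SimpleGraph.pathGraph m).boxProd (SimpleGraph.pathGraph n)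

/-- The ladder graph `P_2 □ P_n` (vertex `(i,k)` of the paper corresponds to
`(⟨i-1⟩, ⟨k-1⟩) : Fin 2 × Fin n`). -/
def ladder (n : ℕ) : SimpleGraph (Fin 2 × Fin n) :=
  (SimpleGraph.pathGraph 2).boxProd (SimpleGraph.pathGraph n)

/-- `α_n`, the effective resistance across the first rung of the ladder `P_2 □ P_n`,
i.e. between the vertices `(1,1)` and `(2,1)` of the paper (junk value `0` for `n = 0`). -/
noncomputable def alpha (n : ℕ) : ℝ :=
  if h : 0 < n then effRes (ladder n) (0, ⟨0, h⟩) (1, ⟨0, h⟩) else 0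

/-!
A symmetric `L` has a pseudoinverse (diagonalize it), which is symmetric by uniqueness; hence the
effective resistance is `f x - f y` for any potential `f` with `L f = e_x - e_y`, since
`L L⁺ L = L`. On the ladder `P₂ □ P_{m+1}` the antisymmetric potential `f (i, k) = (-1)^i g k`
reduces this to the equation `(L_path + 2) g = c δ₀` on the path, the rung at `k` contributing
`2 g k`. It is solved by `g k = h (m - k)`, where `h = 1, 3, 11, 41, …` satisfies
`h (j + 2) = 4 h (j + 1) - h j`: interior vertices give the recurrence, the far end gives
`h 1 = 3 h 0`, and the near end gives `c = h (m + 1) - h m`. Hence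
`α_{m+1} = 2 h m / (h (m + 1) - h m)`, and the recursion for `α` is the recurrence for `h`.
-/

namespace IsMoorePenroseInverse

variable {V : Type*} [Fintype V] [DecidableEq V] {L P Q : Matrix V V ℝ}

theorem transpose (h : IsMoorePenroseInverse L P) : IsMoorePenroseInverse Lᵀ Pᵀ := by
  obtain ⟨h₁, h₂, h₃, h₄⟩ := h
  refine ⟨?_, ?_, ?_, ?_⟩
  · simpa [Matrix.transpose_mul, Matrix.mul_assoc] using congrArg Matrix.transpose h₁
  · simpa [Matrix.transpose_mul, Matrix.mul_assoc] using congrArg Matrix.transpose h₂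
  · rw [← Matrix.transpose_mul, h₄]; exact h₄
  · rw [← Matrix.transpose_mul, h₃]; exact h₃

theorem mul_eq_mul (hP : IsMoorePenroseInverse L P) (hQ : IsMoorePenroseInverse L Q) :
    L * P = L * Q :=
  calc L * P = (L * Q * L * P)ᵀ := by rw [hQ.1, hP.2.2.1]
    _ = (L * P)ᵀ * (L * Q)ᵀ := by rw [Matrix.mul_assoc (L * Q), Matrix.transpose_mul]
    _ = L * Q := by rw [hP.2.2.1, hQ.2.2.1, ← Matrix.mul_assoc, hP.1]

theorem unique (hP : IsMoorePenroseInverse L P) (hQ : IsMoorePenroseInverse L Q) : P = Q := by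
  have hLP : L * P = L * Q := hP.mul_eq_mul hQ
  have hPL : P * L = Q * L := by
    simpa using congrArg Matrix.transpose (hP.transpose.mul_eq_mul hQ.transpose)
  calc P = P * L * P := hP.2.1.symm
    _ = Q * L * Q := by rw [hPL, Matrix.mul_assoc, hLP, ← Matrix.mul_assoc]
    _ = Q := hQ.2.1

theorem map (φ : Matrix V V ℝ ≃⋆ₐ[ℝ] Matrix V V ℝ) (h : IsMoorePenroseInverse L P) :
    IsMoorePenroseInverse (φ L) (φ P) := by
  obtain ⟨h₁, h₂, h₃, h₄⟩ := h
  simp only [IsMoorePenroseInverse, ← conjTranspose_eq_transpose_of_trivial,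
    ← star_eq_conjTranspose, ← map_mul, ← map_star] at *
  rw [h₁, h₂, h₃, h₄]
  exact ⟨rfl, rfl, rfl, rfl⟩

theorem diagonal_inv (d : V → ℝ) : IsMoorePenroseInverse (diagonal d) (diagonal d⁻¹) := by
  refine ⟨?_, ?_, ?_, ?_⟩ <;> simp only [diagonal_mul_diagonal, diagonal_transpose]
  · simp
  · congr 1; ext i; simpa using mul_inv_mul_cancel (d i)⁻¹

end IsMoorePenroseInverse

theorem Matrix.IsHermitian.isMoorePenroseInverse_pinv {V : Type*} [Fintype V] [DecidableEq V]
    {L : Matrix V V ℝ} (hL : L.IsHermitian) : IsMoorePenroseInverse L (pinv L) := by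
  have hex : ∃ P, IsMoorePenroseInverse L P := by
    rw [hL.spectral_theorem]
    exact ⟨_, (IsMoorePenroseInverse.diagonal_inv _).map _⟩
  rw [pinv, dif_pos hex]
  exact hex.choose_spec

theorem Matrix.IsHermitian.pinv_transpose {V : Type*} [Fintype V] [DecidableEq V]
    {L : Matrix V V ℝ} (hL : L.IsHermitian) : (pinv L)ᵀ = pinv L := by
  have h := hL.isMoorePenroseInverse_pinv.transpose
  rw [← conjTranspose_eq_transpose_of_trivial L, hL.eq] at h
  exact h.unique hL.isMoorePenroseInverse_pinv

theorem Matrix.IsHermitian.effResM_eq_sub {V : Type*} [Fintype V] [DecidableEq V]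
    {L : Matrix V V ℝ} (hL : L.IsHermitian) {x y : V} {f : V → ℝ}
    (hf : L *ᵥ f = Pi.single x 1 - Pi.single y 1) :
    effResM L x y = f x - f y := by
  have hLt : Lᵀ = L := by rw [← conjTranspose_eq_transpose_of_trivial, hL.eq]
  have hyx : pinv L y x = pinv L x y := congr_fun₂ hL.pinv_transpose x y
  -- both sides are `bᵀ L⁺ b` for `b = e_x - e_y = L f`, using `L L⁺ L = L`
  calc effResM L x y = (L *ᵥ f) ⬝ᵥ (pinv L *ᵥ (L *ᵥ f)) := by
        rw [hf, effResM]
        simp only [mulVec_sub, mulVec_single, MulOpposite.op_one, one_smul, dotProduct_sub,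
          sub_dotProduct, single_dotProduct, col_apply, one_mul, hyx]
        ring
    _ = f ⬝ᵥ ((L * pinv L * L) *ᵥ f) := by
        rw [mulVec_mulVec, ← vecMul_transpose, hLt, ← dotProduct_mulVec, mulVec_mulVec,
          Matrix.mul_assoc]
    _ = f x - f y := by
        rw [hL.isMoorePenroseInverse_pinv.1, hf]
        simp [dotProduct_sub]

namespace SimpleGraph

theorem lapMatrix_boxProd_mulVec {α β : Type*} [Fintype α] [Fintype β] [DecidableEq α]
    [DecidableEq β] (G : SimpleGraph α) (H : SimpleGraph β) [DecidableRel G.Adj]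
    [DecidableRel H.Adj] (u : α → ℝ) (g : β → ℝ) :
    (G □ H).lapMatrix ℝ *ᵥ (fun v ↦ u v.1 * g v.2) =
      fun v ↦ (G.lapMatrix ℝ *ᵥ u) v.1 * g v.2 + u v.1 * (H.lapMatrix ℝ *ᵥ g) v.2 := by
  ext ⟨a, b⟩
  simp only [lapMatrix_mulVec_apply, degree_boxProd, neighborFinset_boxProd, Finset.sum_disjUnion,
    Finset.sum_product, Finset.sum_singleton, ← Finset.sum_mul, ← Finset.mul_sum]
  push_cast
  ring

theorem lapMatrix_pathGraph_mulVec_apply {n : ℕ} (g : ℕ → ℝ) (k : Fin n) :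
    ((pathGraph n).lapMatrix ℝ *ᵥ fun l ↦ g l) k =
      (if k + 1 < n then g k - g (k + 1) else 0) + (if 0 < k.val then g k - g (k - 1) else 0) := by
  have hdiff : ((pathGraph n).lapMatrix ℝ *ᵥ fun l ↦ g l) k =
      ∑ l : Fin n, if (pathGraph n).Adj k l then g k - g l else 0 := by
    rw [lapMatrix_mulVec_apply, ← Finset.sum_filter, ← neighborFinset_eq_filter,
      Finset.sum_sub_distrib, Finset.sum_const, card_neighborFinset_eq_degree, nsmul_eq_mul]
  have hsplit : ∀ l : Fin n, (if (pathGraph n).Adj k l then g k - g l else 0) =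
      (if k + 1 = l.val then g k - g l else 0) + (if l.val + 1 = k then g k - g l else 0) := by
    intro l
    rw [pathGraph_adj]
    by_cases h : k + 1 = l.val
    · simp [h, show l.val + 1 ≠ k by omega]
    · simp [h]
  rw [hdiff, Finset.sum_congr rfl fun l _ ↦ hsplit l, Finset.sum_add_distrib,
    Fin.sum_univ_eq_sum_range (fun l ↦ if k + 1 = l then g k - g l else 0),
    Fin.sum_univ_eq_sum_range (fun l ↦ if l + 1 = k then g k - g l else 0),
    Finset.sum_ite_eq]
  rcases k with ⟨_ | m, hk⟩
  · simp
  · simp [Finset.sum_ite_eq', show m < n by omega]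

end SimpleGraph

noncomputable def ladderSeq : ℕ → ℝ
  | 0 => 1
  | 1 => 3
  | n + 2 => 4 * ladderSeq (n + 1) - ladderSeq n

theorem ladderSeq_add_two (m : ℕ) :
    ladderSeq (m + 2) = 4 * ladderSeq (m + 1) - ladderSeq m := rfl

theorem ladderSeq_pos_and_lt_succ (m : ℕ) : 0 < ladderSeq m ∧ ladderSeq m < ladderSeq (m + 1) := by
  induction m with
  | zero => norm_num [ladderSeq]
  | succ m ih =>
    refine ⟨ih.1.trans ih.2, ?_⟩
    linarith [ladderSeq_add_two m]

open SimpleGraph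

theorem lapMatrix_pathGraph_mulVec_ladderSeq (m : ℕ) :
    (pathGraph (m + 1)).lapMatrix ℝ *ᵥ (fun l : Fin (m + 1) ↦ ladderSeq (m - l)) +
        2 • (fun l : Fin (m + 1) ↦ ladderSeq (m - l)) =
      (ladderSeq (m + 1) - ladderSeq m) • Pi.single 0 1 := by
  ext ⟨k, hk⟩
  obtain ⟨j, rfl⟩ : ∃ j, m = k + j := ⟨m - k, by omega⟩
  have hL := lapMatrix_pathGraph_mulVec_apply (fun l ↦ ladderSeq (k + j - l)) ⟨k, hk⟩
  simp only [Pi.add_apply, Pi.smul_apply, smul_eq_mul, Pi.single_apply, Fin.ext_iff] at hL ⊢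
  rw [hL]
  rcases j with _ | i <;> rcases k with _ | k
  · norm_num [ladderSeq]
  · norm_num [ladderSeq]
  · simp
    linarith [ladderSeq_add_two i]
  · simp [show k + 1 + (i + 1) - (k + 1 + 1) = i by omega, show k + 1 + (i + 1) - k = i + 2 by omega]
    linarith [ladderSeq_add_two i]

theorem lapMatrix_ladder_mulVec (m : ℕ) :
    (ladder (m + 1)).lapMatrix ℝ *ᵥ (fun v ↦ (-1) ^ (v.1 : ℕ) * ladderSeq (m - v.2)) =
      (ladderSeq (m + 1) - ladderSeq m) • (Pi.single (0, 0) 1 - Pi.single (1, 0) 1) := by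
  have hrung : (pathGraph 2).lapMatrix ℝ *ᵥ (fun i ↦ (-1) ^ (i : ℕ)) =
      2 • fun i : Fin 2 ↦ (-1 : ℝ) ^ (i : ℕ) := by
    ext i
    rw [lapMatrix_pathGraph_mulVec_apply]
    fin_cases i <;> norm_num
  have h := lapMatrix_boxProd_mulVec (pathGraph 2) (pathGraph (m + 1)) (fun i ↦ (-1) ^ (i : ℕ))
    (fun l ↦ ladderSeq (m - l))
  unfold ladder
  rw [h, hrung]
  ext ⟨i, k⟩
  have hk := congrFun (lapMatrix_pathGraph_mulVec_ladderSeq m) k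
  simp only [Pi.add_apply, Pi.smul_apply, smul_eq_mul] at hk ⊢
  fin_cases i <;> simp [Pi.single_apply] at hk ⊢ <;> linarith

theorem alpha_succ (m : ℕ) :
    alpha (m + 1) = 2 * ladderSeq m / (ladderSeq (m + 1) - ladderSeq m) := by
  have hc : ladderSeq (m + 1) - ladderSeq m ≠ 0 := (sub_pos.2 (ladderSeq_pos_and_lt_succ m).2).ne'
  have hf : (ladder (m + 1)).lapMatrix ℝ *ᵥ
      (ladderSeq (m + 1) - ladderSeq m)⁻¹ • (fun v ↦ (-1) ^ (v.1 : ℕ) * ladderSeq (m - v.2)) =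
      Pi.single (0, 0) 1 - Pi.single (1, 0) 1 := by
    rw [mulVec_smul, lapMatrix_ladder_mulVec, smul_smul, inv_mul_cancel₀ hc, one_smul]
  rw [alpha, dif_pos m.succ_pos, effRes]
  refine ((isHermitian_lapMatrix _ _).effResM_eq_sub hf).trans ?_
  simp only [Fin.isValue, Pi.smul_apply, Fin.coe_ofNat_eq_mod, Nat.zero_mod, pow_zero, tsub_zero,
    one_mul, smul_eq_mul, Nat.mod_succ, pow_one, neg_mul, mul_neg, sub_neg_eq_add]
  ring

theorem alpha_one_and_rec :
    alpha 1 = 1 ∧ ∀ n : ℕ, 1 ≤ n → alpha (n + 1) = (alpha n + 2) / (alpha n + 3) := by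
  refine ⟨by norm_num [alpha_succ 0, ladderSeq], fun n hn ↦ ?_⟩
  obtain ⟨m, rfl⟩ : ∃ m, n = m + 1 := ⟨n - 1, by omega⟩
  have hc : ladderSeq (m + 1) - ladderSeq m ≠ 0 := (sub_pos.2 (ladderSeq_pos_and_lt_succ m).2).ne'
  rw [alpha_succ, alpha_succ, ladderSeq_add_two]
  field_simp
  ring
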